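/- Fix d ∈ (0,1) and Δ ≥ 0. For all reals ℓ₁, ℓ, ℓ₂ with 1 ≤ ℓ₁ < ℓ < ℓ₂ and with I(ℓ₁) ≥ 0, it holds that I(ℓ₁)/ℓ₂ ≤ I(ℓ)/ℓ ≤ I(ℓ₂)/ℓ₁. -/
import Mathlib


/-- A finitely supported probability mass function on the positive integers
(represented as a function on `ℕ` vanishing at `0`). -/
def IsRunPMF (P : ℕ → ℝ) : Prop :=
  (∀ i, 0 ≤ P i) ∧ P 0 = 0 ∧ (Function.support P).Finite ∧ ∑' i : ℕ, P i = 1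

/-- `P_{i→j} = C(i,j)·(1−d)^j·d^(i−j)`: the probability that a run of `i` bits
sent through the binary deletion channel with deletion probability `d` yields
`j` surviving bits (equal to `0` for `j > i`). -/
noncomputable def Ptrans (d : ℝ) (i j : ℕ) : ℝ :=
  (i.choose j : ℝ) * (1 - d) ^ j * d ^ (i - j)

/-- The run-length information rate
`R_mem(𝒫) = Σ_{i,j} 𝒫_i·P_{i→j}·log₂(P_{i→j} / Σ_{i'} 𝒫_{i'}·P_{i'→j})`,
with terms whose numerator vanishes taken to be `0` (they are multiplied by the
vanishing factor `𝒫_i·P_{i→j}`). -/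
noncomputable def Rmem (d : ℝ) (P : ℕ → ℝ) : ℝ :=
  ∑' i : ℕ, ∑' j : ℕ, P i * Ptrans d i j *
    Real.logb 2 (Ptrans d i j / (∑' i' : ℕ, P i' * Ptrans d i' j))

/-- The penalized rate `h(𝒫) = R_mem(𝒫) − Δ·Σ_i 𝒫_i·d^i`. -/
noncomputable def hPen (d Δ : ℝ) (P : ℕ → ℝ) : ℝ :=
  Rmem d P - Δ * ∑' i : ℕ, P i * d ^ i

/-- The mean run length `L(𝒫) = Σ_i i·𝒫_i`. -/
noncomputable def Lmean (P : ℕ → ℝ) : ℝ :=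
  ∑' i : ℕ, (i : ℝ) * P i

/-- `I(ℓ)`: the supremum of the penalized rate `h` over finitely supported
pmfs on the positive integers with mean run length `ℓ`. -/
noncomputable def Isup (d Δ ℓ : ℝ) : ℝ :=
  sSup { r | ∃ P : ℕ → ℝ, IsRunPMF P ∧ Lmean P = ℓ ∧ r = hPen d Δ P }

open Finset Real

lemma tsum_eq_range {f : ℕ → ℝ} {N : ℕ} (h : ∀ i, N ≤ i → f i = 0) :
    ∑' i, f i = ∑ i ∈ Finset.range N, f i :=
  tsum_eq_sum (fun b hb => h b (le_of_not_gt (fun hlt => hb (Finset.mem_range.mpr hlt))))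

lemma Ptrans_zero_of_lt {d : ℝ} {i j : ℕ} (h : i < j) : Ptrans d i j = 0 := by
  unfold Ptrans; rw [Nat.choose_eq_zero_of_lt h]; simp

/-- Bound on the support. -/
lemma exists_suppBdd {P : ℕ → ℝ} (h : (Function.support P).Finite) :
    ∃ N : ℕ, ∀ i, N ≤ i → P i = 0 := by
  rcases h.bddAbove with ⟨m, hm⟩
  refine ⟨m + 1, fun i hi => ?_⟩
  by_contra hne
  have : i ∈ Function.support P := hne
  have := hm this
  omega

lemma Rmem_eq_sum (d : ℝ) (P : ℕ → ℝ) (N : ℕ) (hB : ∀ i, N ≤ i → P i = 0) :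
    Rmem d P = ∑ i ∈ Finset.range N, ∑ j ∈ Finset.range N,
      P i * Ptrans d i j *
        Real.logb 2 (Ptrans d i j / ∑ i' ∈ Finset.range N, P i' * Ptrans d i' j) := by
  unfold Rmem
  have hq : ∀ j : ℕ, (∑' i' : ℕ, P i' * Ptrans d i' j)
      = ∑ i' ∈ Finset.range N, P i' * Ptrans d i' j :=
    fun j => tsum_eq_range (fun i hi => by rw [hB i hi, zero_mul])
  simp only [hq]
  rw [tsum_eq_range (N := N) (fun i hi => by simp [hB i hi])]
  apply Finset.sum_congr rfl
  intro i hi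
  apply tsum_eq_range
  intro j hj
  have hij : i < j := lt_of_lt_of_le (Finset.mem_range.mp hi) hj
  rw [Ptrans_zero_of_lt hij, mul_zero, zero_mul]

lemma Lmean_eq_sum (P : ℕ → ℝ) (N : ℕ) (hB : ∀ i, N ≤ i → P i = 0) :
    Lmean P = ∑ i ∈ Finset.range N, (i : ℝ) * P i :=
  tsum_eq_range (fun i hi => by rw [hB i hi, mul_zero])

lemma wsum_eq_sum (P : ℕ → ℝ) (f : ℕ → ℝ) (N : ℕ) (hB : ∀ i, N ≤ i → P i = 0) :
    (∑' i : ℕ, P i * f i) = ∑ i ∈ Finset.range N, P i * f i :=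
  tsum_eq_range (fun i hi => by rw [hB i hi, zero_mul])

lemma sum_P_eq_one {P : ℕ → ℝ} (hP : IsRunPMF P) (N : ℕ) (hB : ∀ i, N ≤ i → P i = 0) :
    ∑ i ∈ Finset.range N, P i = 1 := by
  rw [← tsum_eq_range hB]
  exact hP.2.2.2
lemma gibbs (s : Finset ℕ) (p q : ℕ → ℝ) (hp : ∀ j ∈ s, 0 ≤ p j)
    (hq : ∀ j ∈ s, 0 ≤ q j)
    (hpq : ∀ j ∈ s, p j ≠ 0 → 0 < q j)
    (hsum : ∑ j ∈ s, q j ≤ ∑ j ∈ s, p j) :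
    0 ≤ ∑ j ∈ s, p j * Real.logb 2 (p j / q j) := by
  have hlog2 : (0:ℝ) < Real.log 2 := Real.log_pos one_lt_two
  have key : ∀ j ∈ s, (p j - q j) / Real.log 2 ≤ p j * Real.logb 2 (p j / q j) := by
    intro j hj
    rcases eq_or_ne (p j) 0 with h0 | h0
    · rw [h0]
      simp only [zero_mul, zero_sub]
      have h2 := hq j hj
      have h3 : -q j ≤ 0 := by linarith
      exact div_nonpos_of_nonpos_of_nonneg h3 hlog2.le
    · have hp0 : 0 < p j := lt_of_le_of_ne (hp j hj) (Ne.symm h0)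
      have hq0 : 0 < q j := hpq j hj h0
      have hlog : Real.log (q j / p j) ≤ q j / p j - 1 :=
        Real.log_le_sub_one_of_pos (by positivity)
      have h1 : Real.log (p j / q j) = - Real.log (q j / p j) := by
        rw [← Real.log_inv]
        congr 1
        field_simp
      have hgoal : p j * Real.logb 2 (p j / q j)
          = (p j * (-Real.log (q j / p j))) / Real.log 2 := by
        rw [Real.logb, h1]; ring
      rw [hgoal]
      have hnum : p j - q j ≤ p j * (-Real.log (q j / p j)) := by
        have h4 : p j * Real.log (q j / p j) ≤ p j * (q j / p j - 1) :=
          mul_le_mul_of_nonneg_left hlog hp0.le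
        have h5 : p j * (q j / p j - 1) = q j - p j := by field_simp
        nlinarith
      gcongr
  have := Finset.sum_le_sum key
  have h6 : ∑ j ∈ s, (p j - q j) / Real.log 2
      = (∑ j ∈ s, p j - ∑ j ∈ s, q j) / Real.log 2 := by
    rw [← Finset.sum_div, Finset.sum_sub_distrib]
  have h7 : 0 ≤ (∑ j ∈ s, p j - ∑ j ∈ s, q j) / Real.log 2 :=
    div_nonneg (by linarith) hlog2.le
  linarith [this, h6 ▸ this]
lemma Ptrans_nonneg {d : ℝ} (h0 : 0 ≤ d) (h1 : d ≤ 1) (i j : ℕ) : 0 ≤ Ptrans d i j := by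
  have h2 : (0:ℝ) ≤ 1 - d := by linarith
  unfold Ptrans; positivity

lemma sum_Ptrans (d : ℝ) (i : ℕ) : ∑ j ∈ range (i + 1), Ptrans d i j = 1 := by
  have h : ∑ j ∈ range (i + 1), Ptrans d i j = ((1 - d) + d) ^ i := by
    rw [add_pow]
    apply Finset.sum_congr rfl
    intro j _
    unfold Ptrans
    ring
  rw [h]
  norm_num

lemma sum_Ptrans_range {d : ℝ} {i N : ℕ} (h : i < N) :
    ∑ j ∈ range N, Ptrans d i j = 1 := by
  rw [← sum_Ptrans d i]
  symm
  apply Finset.sum_subset (Finset.range_subset_range.mpr h)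
  intro j _ hj
  exact Ptrans_zero_of_lt (by simpa using hj)

lemma Ptrans_le_one {d : ℝ} (h0 : 0 ≤ d) (h1 : d ≤ 1) (i j : ℕ) : Ptrans d i j ≤ 1 := by
  rcases lt_or_ge i j with h | h
  · rw [Ptrans_zero_of_lt h]; norm_num
  · calc Ptrans d i j ≤ ∑ k ∈ range (i + 1), Ptrans d i k :=
        Finset.single_le_sum (fun k _ => Ptrans_nonneg h0 h1 i k)
          (Finset.mem_range.mpr (Nat.lt_succ_of_le h))
    _ = 1 := sum_Ptrans d i


lemma hPen_le_mean_add_one (d Δ : ℝ) (hd0 : 0 < d) (hd1 : d < 1) (hΔ : 0 ≤ Δ)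
    (P : ℕ → ℝ) (hP : IsRunPMF P) : hPen d Δ P ≤ Lmean P + 1 := by
  obtain ⟨N, hB⟩ := exists_suppBdd hP.2.2.1
  have hPnn := hP.1
  set W := Ptrans d with hWdef
  have hW0 : ∀ i j, 0 ≤ W i j := fun i j => Ptrans_nonneg hd0.le hd1.le i j
  set q : ℕ → ℝ := fun j => ∑ i' ∈ Finset.range N, P i' * W i' j with hqdef
  -- penalty is nonnegative
  have hpen0 : 0 ≤ ∑' i : ℕ, P i * d ^ i := by
    rw [wsum_eq_sum P (fun i => d ^ i) N hB]
    apply Finset.sum_nonneg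
    intro i _
    have := hPnn i
    positivity
  have step1 : hPen d Δ P ≤ Rmem d P := by
    unfold hPen
    nlinarith
  -- termwise bound
  have hqP : ∀ i ∈ Finset.range N, ∀ j, P i * W i j ≤ q j := by
    intro i hi j
    exact Finset.single_le_sum (f := fun i' => P i' * W i' j)
      (fun k _ => mul_nonneg (hPnn k) (hW0 k j)) hi
  have step2 : Rmem d P ≤ ∑ i ∈ Finset.range N, P i * Real.logb 2 (1 / P i) := by
    rw [Rmem_eq_sum d P N hB]
    apply Finset.sum_le_sum
    intro i hi
    have hrow : ∀ j ∈ Finset.range N,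
        P i * W i j * Real.logb 2 (W i j / q j) ≤ P i * W i j * Real.logb 2 (1 / P i) := by
      intro j hj
      rcases eq_or_ne (P i * W i j) 0 with h0 | h0
      · rw [h0, zero_mul, zero_mul]
      · have hPW : 0 < P i * W i j :=
          lt_of_le_of_ne (mul_nonneg (hPnn i) (hW0 i j)) (Ne.symm h0)
        have hPi : 0 < P i := by
          rcases mul_ne_zero_iff.mp h0 with ⟨h1, h2⟩
          exact lt_of_le_of_ne (hPnn i) (Ne.symm h1)
        have hWij : 0 < W i j := by
          rcases mul_ne_zero_iff.mp h0 with ⟨h1, h2⟩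
          exact lt_of_le_of_ne (hW0 i j) (Ne.symm h2)
        have hqj : 0 < q j := lt_of_lt_of_le hPW (hqP i hi j)
        have hle : W i j / q j ≤ 1 / P i := by
          rw [div_le_div_iff₀ hqj hPi]
          calc W i j * P i = P i * W i j := by ring
            _ ≤ q j := hqP i hi j
            _ = 1 * q j := by ring
        have hmono : Real.logb 2 (W i j / q j) ≤ Real.logb 2 (1 / P i) :=
          Real.logb_le_logb_of_le one_lt_two (by positivity) hle
        exact mul_le_mul_of_nonneg_left hmono hPW.le
    calc ∑ j ∈ Finset.range N, P i * W i j * Real.logb 2 (W i j / q j)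
        ≤ ∑ j ∈ Finset.range N, P i * W i j * Real.logb 2 (1 / P i) :=
          Finset.sum_le_sum hrow
      _ = P i * Real.logb 2 (1 / P i) * ∑ j ∈ Finset.range N, W i j := by
          rw [Finset.mul_sum]; apply Finset.sum_congr rfl; intro j _; ring
      _ = P i * Real.logb 2 (1 / P i) := by
          rw [hWdef, sum_Ptrans_range (Finset.mem_range.mp hi)]; ring
  -- entropy bound via geometric comparison distribution
  set g : ℕ → ℝ := fun i => (1 / 2 : ℝ) ^ (i + 1) with hgdef
  have hgsum : ∀ M : ℕ, ∑ i ∈ Finset.range M, g i = 1 - (1 / 2 : ℝ) ^ M := by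
    intro M
    induction M with
    | zero => simp
    | succ n ih => rw [Finset.sum_range_succ, ih, hgdef]; ring
  have hglog : ∀ i : ℕ, Real.logb 2 (g i) = -((i : ℝ) + 1) := by
    intro i
    rw [hgdef]
    simp only [one_div]
    rw [← Real.rpow_natCast (2 : ℝ)⁻¹ (i + 1), Real.logb_rpow_eq_mul_logb_of_pos (by norm_num)]
    rw [Real.logb_inv, Real.logb_self_eq_one (by norm_num : (1:ℝ) < 2)]
    push_cast; ring
  have hgibbs : 0 ≤ ∑ i ∈ Finset.range N, P i * Real.logb 2 (P i / g i) := by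
    apply gibbs _ P g (fun i _ => hPnn i) (fun i _ => by positivity)
      (fun i _ _ => by positivity)
    rw [sum_P_eq_one hP N hB, hgsum N]
    have : (0:ℝ) ≤ (1/2:ℝ) ^ N := by positivity
    linarith
  have hterm : ∀ i ∈ Finset.range N,
      P i * Real.logb 2 (1 / P i)
        = P i * ((i : ℝ) + 1) - P i * Real.logb 2 (P i / g i) := by
    intro i _
    rcases eq_or_ne (P i) 0 with h0 | h0
    · rw [h0]; ring
    · have hPi : 0 < P i := lt_of_le_of_ne (hPnn i) (Ne.symm h0)
      have hgi : 0 < g i := by positivity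
      rw [Real.logb_div h0 (ne_of_gt hgi), Real.logb_div (by norm_num) h0, hglog i]
      simp only [Real.logb_one]
      ring
  have step4 : ∑ i ∈ Finset.range N, P i * Real.logb 2 (1 / P i)
      ≤ ∑ i ∈ Finset.range N, P i * ((i : ℝ) + 1) := by
    rw [Finset.sum_congr rfl hterm, Finset.sum_sub_distrib]
    linarith
  have step5 : ∑ i ∈ Finset.range N, P i * ((i : ℝ) + 1) = Lmean P + 1 := by
    have hsplit : ∀ i ∈ Finset.range N, P i * ((i : ℝ) + 1) = (i : ℝ) * P i + P i :=
      fun i _ => by ring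
    rw [Finset.sum_congr rfl hsplit, Finset.sum_add_distrib, ← Lmean_eq_sum P N hB,
      sum_P_eq_one hP N hB]
  linarith

lemma exists_runpmf (a : ℝ) (ha : 1 ≤ a) : ∃ P : ℕ → ℝ, IsRunPMF P ∧ Lmean P = a := by
  set n : ℕ := ⌊a⌋₊ + 2 with hn
  have hn3 : 3 ≤ n := by
    have : 1 ≤ ⌊a⌋₊ := (Nat.one_le_floor_iff a).mpr ha
    omega
  have hna : a < (n : ℝ) := by
    have h1 := Nat.lt_floor_add_one a
    have : ((⌊a⌋₊ : ℝ) + 1) ≤ (n : ℝ) := by rw [hn]; push_cast; linarith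
    linarith
  have hn1 : (1:ℝ) < (n : ℝ) := by
    have : (3:ℝ) ≤ (n:ℝ) := by exact_mod_cast hn3
    linarith
  have hden : (n : ℝ) - 1 ≠ 0 := by linarith
  set p : ℝ := ((n : ℝ) - a) / ((n : ℝ) - 1) with hp
  have hp0 : 0 < p := by apply div_pos <;> linarith
  have hp1 : p ≤ 1 := by
    rw [hp, div_le_one (by linarith)]
    linarith
  set P : ℕ → ℝ := fun i => (if i = 1 then p else 0) + (if i = n then 1 - p else 0) with hP
  have hB : ∀ i, n + 1 ≤ i → P i = 0 := by
    intro i hi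
    rw [hP]
    have h1 : i ≠ 1 := by omega
    have h2 : i ≠ n := by omega
    simp [h1, h2]
  have hsum : ∑ i ∈ Finset.range (n + 1), P i = 1 := by
    rw [hP]
    rw [Finset.sum_add_distrib, Finset.sum_ite_eq' (Finset.range (n+1)) 1 (fun _ => p),
      Finset.sum_ite_eq' (Finset.range (n+1)) n (fun _ => 1 - p)]
    have h1 : (1:ℕ) ∈ Finset.range (n+1) := Finset.mem_range.mpr (by omega)
    have h2 : n ∈ Finset.range (n+1) := Finset.mem_range.mpr (by omega)
    rw [if_pos h1, if_pos h2]
    ring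
  refine ⟨P, ⟨?_, ?_, ?_, ?_⟩, ?_⟩
  · intro i
    have h1 : (0:ℝ) ≤ (if i = 1 then p else 0) := by split; exacts [hp0.le, le_rfl]
    have h2 : (0:ℝ) ≤ (if i = n then 1 - p else 0) := by split; exacts [by linarith, le_rfl]
    show (0:ℝ) ≤ (if i = 1 then p else 0) + (if i = n then 1 - p else 0)
    linarith
  · show (if (0:ℕ) = 1 then p else 0) + (if (0:ℕ) = n then 1 - p else 0) = 0
    rw [if_neg (by omega : ¬ (0:ℕ) = 1), if_neg (by omega : ¬ (0:ℕ) = n), add_zero]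
  · apply Set.Finite.subset (Finset.range (n+1)).finite_toSet
    intro x hx
    simp only [Finset.coe_range, Set.mem_Iio]
    by_contra hxn
    exact hx (hB x (by omega))
  · rw [tsum_eq_range hB, hsum]
  · rw [Lmean, tsum_eq_range (f := fun i => (i:ℝ) * P i) (N := n + 1)
      (fun i hi => by show (i:ℝ) * P i = 0; rw [hB i hi, mul_zero])]
    have : ∀ i ∈ Finset.range (n+1), (i : ℝ) * P i
        = (if i = 1 then (1:ℝ) * p else 0) + (if i = n then (n:ℝ) * (1 - p) else 0) := by
      intro i _
      show (i:ℝ) * ((if i = 1 then p else 0) + (if i = n then 1 - p else 0)) = _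
      by_cases h1 : i = 1
      · subst h1
        have : (1:ℕ) ≠ n := by omega
        simp [this]
      · by_cases h2 : i = n
        · subst h2
          simp [h1]
        · simp [h1, h2]
    rw [Finset.sum_congr rfl this, Finset.sum_add_distrib,
      Finset.sum_ite_eq' (Finset.range (n+1)) 1 (fun _ => (1:ℝ) * p),
      Finset.sum_ite_eq' (Finset.range (n+1)) n (fun _ => (n:ℝ) * (1 - p))]
    have h1 : (1:ℕ) ∈ Finset.range (n+1) := Finset.mem_range.mpr (by omega)
    have h2 : n ∈ Finset.range (n+1) := Finset.mem_range.mpr (by omega)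
    rw [if_pos h1, if_pos h2, hp]
    field_simp
    ring

noncomputable def mixP (P : ℕ → ℝ) (n : ℕ) (ε : ℝ) : ℕ → ℝ :=
  fun i => (1 - ε) * P i + (if i = n then ε else 0)

lemma mixP_bdd {P : ℕ → ℝ} {N n : ℕ} (hB : ∀ i, N ≤ i → P i = 0) (hnN : N ≤ n)
    (ε : ℝ) : ∀ i, n + 1 ≤ i → mixP P n ε i = 0 := by
  intro i hi
  unfold mixP
  rw [hB i (by omega), if_neg (by omega : ¬ i = n)]
  ring

lemma mixP_isRunPMF {P : ℕ → ℝ} (hP : IsRunPMF P) {N n : ℕ}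
    (hB : ∀ i, N ≤ i → P i = 0) (hnN : N ≤ n) (hn1 : 1 ≤ n)
    {ε : ℝ} (hε0 : 0 ≤ ε) (hε1 : ε ≤ 1) : IsRunPMF (mixP P n ε) := by
  have hMB := mixP_bdd hB hnN ε
  refine ⟨?_, ?_, ?_, ?_⟩
  · intro i
    unfold mixP
    have h1 : 0 ≤ (1 - ε) * P i := mul_nonneg (by linarith) (hP.1 i)
    have h2 : (0:ℝ) ≤ (if i = n then ε else 0) := by split; exacts [hε0, le_rfl]
    linarith
  · unfold mixP
    rw [hP.2.1, if_neg (by omega : ¬ (0:ℕ) = n)]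
    ring
  · apply Set.Finite.subset (Finset.range (n+1)).finite_toSet
    intro x hx
    simp only [Finset.coe_range, Set.mem_Iio]
    by_contra hxn
    exact hx (hMB x (by omega))
  · rw [tsum_eq_range hMB]
    unfold mixP
    rw [Finset.sum_add_distrib, ← Finset.mul_sum,
      sum_P_eq_one hP (n+1) (fun i hi => hB i (by omega)),
      Finset.sum_ite_eq' (Finset.range (n+1)) n (fun _ => ε),
      if_pos (Finset.mem_range.mpr (by omega))]
    ring

lemma mixP_Lmean {P : ℕ → ℝ} {N n : ℕ}
    (hB : ∀ i, N ≤ i → P i = 0) (hnN : N ≤ n) (ε : ℝ) :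
    Lmean (mixP P n ε) = (1 - ε) * Lmean P + ε * n := by
  have hMB := mixP_bdd hB hnN ε
  rw [Lmean, tsum_eq_range (f := fun i => (i:ℝ) * mixP P n ε i) (N := n + 1)
    (fun i hi => by show (i:ℝ) * mixP P n ε i = 0; rw [hMB i hi, mul_zero])]
  have : ∀ i ∈ Finset.range (n+1), (i : ℝ) * mixP P n ε i
      = (1 - ε) * ((i:ℝ) * P i) + (if i = n then (n:ℝ) * ε else 0) := by
    intro i _
    unfold mixP
    by_cases h : i = n
    · subst h; simp; ring
    · simp [h]; ring
  rw [Finset.sum_congr rfl this, Finset.sum_add_distrib, ← Finset.mul_sum,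
    ← Lmean_eq_sum P (n+1) (fun i hi => hB i (by omega)),
    Finset.sum_ite_eq' (Finset.range (n+1)) n (fun _ => (n:ℝ) * ε),
    if_pos (Finset.mem_range.mpr (by omega))]
  ring

noncomputable def qout (d : ℝ) (P : ℕ → ℝ) (m j : ℕ) : ℝ :=
  ∑ i' ∈ Finset.range m, P i' * Ptrans d i' j

lemma Rmem_eq_sum' (d : ℝ) (P : ℕ → ℝ) (N : ℕ) (hB : ∀ i, N ≤ i → P i = 0) :
    Rmem d P = ∑ i ∈ Finset.range N, ∑ j ∈ Finset.range N,
      P i * Ptrans d i j * Real.logb 2 (Ptrans d i j / qout d P N j) :=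
  Rmem_eq_sum d P N hB

lemma qout_nonneg {d : ℝ} (hd0 : 0 ≤ d) (hd1 : d ≤ 1) {P : ℕ → ℝ}
    (hPnn : ∀ i, 0 ≤ P i) (m j : ℕ) : 0 ≤ qout d P m j :=
  Finset.sum_nonneg (fun i _ => mul_nonneg (hPnn i) (Ptrans_nonneg hd0 hd1 i j))

lemma qout_ge {d : ℝ} (hd0 : 0 ≤ d) (hd1 : d ≤ 1) {P : ℕ → ℝ}
    (hPnn : ∀ i, 0 ≤ P i) {m i : ℕ} (hi : i ∈ Finset.range m) (j : ℕ) :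
    P i * Ptrans d i j ≤ qout d P m j :=
  Finset.single_le_sum (f := fun i' => P i' * Ptrans d i' j)
    (fun k _ => mul_nonneg (hPnn k) (Ptrans_nonneg hd0 hd1 k j)) hi

lemma qout_mix (d : ℝ) (P : ℕ → ℝ) (n : ℕ) (ε : ℝ) (j : ℕ) :
    qout d (mixP P n ε) (n + 1) j
      = (1 - ε) * qout d P (n + 1) j + ε * Ptrans d n j := by
  unfold qout mixP
  have : ∀ i ∈ Finset.range (n+1),
      ((1 - ε) * P i + (if i = n then ε else 0)) * Ptrans d i j
        = (1 - ε) * (P i * Ptrans d i j) + (if i = n then ε * Ptrans d n j else 0) := by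
    intro i _
    by_cases h : i = n
    · subst h; simp; ring
    · simp [h]; ring
  rw [Finset.sum_congr rfl this, Finset.sum_add_distrib, ← Finset.mul_sum,
    Finset.sum_ite_eq' (Finset.range (n+1)) n (fun _ => ε * Ptrans d n j),
    if_pos (Finset.mem_range.mpr (by omega))]

lemma qout_sum_one (d : ℝ) {P : ℕ → ℝ} (hP : IsRunPMF P) {N m : ℕ}
    (hB : ∀ i, N ≤ i → P i = 0) (hNm : N ≤ m) :
    ∑ j ∈ Finset.range m, qout d P m j = 1 := by
  unfold qout
  rw [Finset.sum_comm]
  have : ∀ i ∈ Finset.range m, ∑ j ∈ Finset.range m, P i * Ptrans d i j = P i := by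
    intro i hi
    rw [← Finset.mul_sum, sum_Ptrans_range (Finset.mem_range.mp hi), mul_one]
  rw [Finset.sum_congr rfl this, sum_P_eq_one hP m (fun i hi => hB i (by omega))]

lemma Rmem_mix_ge (d : ℝ) (hd0 : 0 < d) (hd1 : d < 1)
    {P : ℕ → ℝ} (hP : IsRunPMF P) {N n : ℕ}
    (hB : ∀ i, N ≤ i → P i = 0) (hnN : N ≤ n) (hn1 : 1 ≤ n)
    {ε : ℝ} (hε0 : 0 < ε) (hε1 : ε < 1) :
    (1 - ε) * Rmem d P ≤ Rmem d (mixP P n ε) := by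
  have hPnn := hP.1
  have hB' : ∀ i, n + 1 ≤ i → P i = 0 := fun i hi => hB i (by omega)
  set M := mixP P n ε with hMdef
  have hMB : ∀ i, n + 1 ≤ i → M i = 0 := mixP_bdd hB hnN ε
  have hMpmf : IsRunPMF M := mixP_isRunPMF hP hB hnN hn1 hε0.le hε1.le
  have hMnn := hMpmf.1
  set m := n + 1 with hm
  have hnm : n ∈ Finset.range m := Finset.mem_range.mpr (by omega)
  have hW0 : ∀ i j, 0 ≤ Ptrans d i j := Ptrans_nonneg hd0.le hd1.le
  have hq0 : ∀ j, 0 ≤ qout d P m j := qout_nonneg hd0.le hd1.le hPnn m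
  have hQmix : ∀ j, qout d M m j = (1 - ε) * qout d P m j + ε * Ptrans d n j :=
    qout_mix d P n ε
  have hQ0 : ∀ j, 0 ≤ qout d M m j := qout_nonneg hd0.le hd1.le hMnn m
  have hsQM : ∑ j ∈ Finset.range m, qout d M m j = 1 := qout_sum_one d hMpmf hMB le_rfl
  have hsq : ∑ j ∈ Finset.range m, qout d P m j = 1 := qout_sum_one d hP hB' le_rfl
  have hsWn : ∑ j ∈ Finset.range m, Ptrans d n j = 1 := sum_Ptrans_range (by omega)
  have hT2 : 0 ≤ ∑ j ∈ Finset.range m,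
      Ptrans d n j * Real.logb 2 (Ptrans d n j / qout d M m j) := by
    apply gibbs (Finset.range m) (fun j => Ptrans d n j) (fun j => qout d M m j)
      (fun j _ => hW0 n j) (fun j _ => hQ0 j) ?_ (by rw [hsQM, hsWn])
    intro j _ hne
    have hWn : 0 < Ptrans d n j := lt_of_le_of_ne (hW0 n j) (Ne.symm hne)
    show 0 < qout d M m j
    rw [hQmix j]
    nlinarith [hq0 j]
  have hExtra : 0 ≤ ∑ j ∈ Finset.range m,
      qout d P m j * Real.logb 2 (qout d P m j / qout d M m j) := by
    apply gibbs (Finset.range m) (fun j => qout d P m j) (fun j => qout d M m j)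
      (fun j _ => hq0 j) (fun j _ => hQ0 j) ?_ (by rw [hsQM, hsq])
    intro j _ hne
    have hqj : 0 < qout d P m j := lt_of_le_of_ne (hq0 j) (Ne.symm (by exact hne))
    show 0 < qout d M m j
    rw [hQmix j]
    nlinarith [hW0 n j]
  rw [Rmem_eq_sum' d M m hMB, Rmem_eq_sum' d P m hB']
  -- decompose the mixture double sum
  have e1 : ∑ i ∈ Finset.range m, ∑ j ∈ Finset.range m,
        M i * Ptrans d i j * Real.logb 2 (Ptrans d i j / qout d M m j)
      = (1 - ε) * ∑ i ∈ Finset.range m, ∑ j ∈ Finset.range m,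
          P i * Ptrans d i j * Real.logb 2 (Ptrans d i j / qout d M m j)
        + ε * ∑ j ∈ Finset.range m,
            Ptrans d n j * Real.logb 2 (Ptrans d n j / qout d M m j) := by
    have h1 : ∀ i ∈ Finset.range m,
        (∑ j ∈ Finset.range m, M i * Ptrans d i j
            * Real.logb 2 (Ptrans d i j / qout d M m j))
        = (1 - ε) * (∑ j ∈ Finset.range m, P i * Ptrans d i j
            * Real.logb 2 (Ptrans d i j / qout d M m j))
          + (if i = n then ε * ∑ j ∈ Finset.range m,
              Ptrans d n j * Real.logb 2 (Ptrans d n j / qout d M m j) else 0) := by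
      intro i _
      by_cases h : i = n
      · rw [h, if_pos rfl, Finset.mul_sum, Finset.mul_sum, ← Finset.sum_add_distrib]
        apply Finset.sum_congr rfl
        intro j _
        have hMn : M n = (1 - ε) * P n + ε := by
          rw [hMdef]; unfold mixP; rw [if_pos rfl]
        rw [hMn]; ring
      · rw [if_neg h, add_zero, Finset.mul_sum]
        apply Finset.sum_congr rfl
        intro j _
        have hMi : M i = (1 - ε) * P i := by
          rw [hMdef]; unfold mixP; rw [if_neg h, add_zero]
        rw [hMi]; ring
    rw [Finset.sum_congr rfl h1, Finset.sum_add_distrib, ← Finset.mul_sum,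
      Finset.sum_ite_eq' (Finset.range m) n _, if_pos hnm]
  -- split the logarithm against the unmixed output distribution
  have e2 : ∑ i ∈ Finset.range m, ∑ j ∈ Finset.range m,
        P i * Ptrans d i j * Real.logb 2 (Ptrans d i j / qout d M m j)
      = (∑ i ∈ Finset.range m, ∑ j ∈ Finset.range m,
          P i * Ptrans d i j * Real.logb 2 (Ptrans d i j / qout d P m j))
        + ∑ j ∈ Finset.range m,
            qout d P m j * Real.logb 2 (qout d P m j / qout d M m j) := by
    have h2 : ∀ i ∈ Finset.range m, ∀ j ∈ Finset.range m,
        P i * Ptrans d i j * Real.logb 2 (Ptrans d i j / qout d M m j)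
        = P i * Ptrans d i j * Real.logb 2 (Ptrans d i j / qout d P m j)
          + P i * Ptrans d i j * Real.logb 2 (qout d P m j / qout d M m j) := by
      intro i hi j _
      rcases eq_or_ne (P i * Ptrans d i j) 0 with h0 | h0
      · rw [h0]; simp
      · rcases mul_ne_zero_iff.mp h0 with ⟨hp1, hp2⟩
        have hPi : 0 < P i := lt_of_le_of_ne (hPnn i) (Ne.symm hp1)
        have hWij : 0 < Ptrans d i j := lt_of_le_of_ne (hW0 i j) (Ne.symm hp2)
        have hqj : 0 < qout d P m j :=
          lt_of_lt_of_le (by positivity) (qout_ge hd0.le hd1.le hPnn hi j)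
        have hQMj : 0 < qout d M m j := by
          rw [hQmix j]
          nlinarith [hW0 n j]
        have hx : Ptrans d i j / qout d M m j
            = (Ptrans d i j / qout d P m j) * (qout d P m j / qout d M m j) := by
          field_simp
        rw [hx, Real.logb_mul (by positivity) (by positivity)]
        ring
    calc ∑ i ∈ Finset.range m, ∑ j ∈ Finset.range m,
          P i * Ptrans d i j * Real.logb 2 (Ptrans d i j / qout d M m j)
        = ∑ i ∈ Finset.range m, ((∑ j ∈ Finset.range m,
            P i * Ptrans d i j * Real.logb 2 (Ptrans d i j / qout d P m j))
          + ∑ j ∈ Finset.range m,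
            P i * Ptrans d i j * Real.logb 2 (qout d P m j / qout d M m j)) := by
          apply Finset.sum_congr rfl
          intro i hi
          rw [← Finset.sum_add_distrib]
          exact Finset.sum_congr rfl (h2 i hi)
      _ = (∑ i ∈ Finset.range m, ∑ j ∈ Finset.range m,
            P i * Ptrans d i j * Real.logb 2 (Ptrans d i j / qout d P m j))
          + ∑ i ∈ Finset.range m, ∑ j ∈ Finset.range m,
            P i * Ptrans d i j * Real.logb 2 (qout d P m j / qout d M m j) := by
          rw [Finset.sum_add_distrib]
      _ = (∑ i ∈ Finset.range m, ∑ j ∈ Finset.range m,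
            P i * Ptrans d i j * Real.logb 2 (Ptrans d i j / qout d P m j))
          + ∑ j ∈ Finset.range m,
            qout d P m j * Real.logb 2 (qout d P m j / qout d M m j) := by
          congr 1
          rw [Finset.sum_comm]
          apply Finset.sum_congr rfl
          intro j _
          rw [← Finset.sum_mul]
          rfl
  rw [e1, e2]
  nlinarith [hT2, hExtra]

lemma mixP_hPen (d Δ : ℝ) (hd0 : 0 < d) (hd1 : d < 1) (hΔ : 0 ≤ Δ)
    {P : ℕ → ℝ} (hP : IsRunPMF P) {N n : ℕ}
    (hB : ∀ i, N ≤ i → P i = 0) (hnN : N ≤ n) (hn1 : 1 ≤ n)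
    {ε : ℝ} (hε0 : 0 < ε) (hε1 : ε < 1) :
    (1 - ε) * hPen d Δ P - ε * Δ ≤ hPen d Δ (mixP P n ε) := by
  have hMB := mixP_bdd hB hnN ε
  have hpen : (∑' i : ℕ, mixP P n ε i * d ^ i)
      = (1 - ε) * (∑' i : ℕ, P i * d ^ i) + ε * d ^ n := by
    rw [wsum_eq_sum (mixP P n ε) (fun i => d ^ i) (n+1) hMB,
        wsum_eq_sum P (fun i => d ^ i) (n+1) (fun i hi => hB i (by omega))]
    have : ∀ i ∈ Finset.range (n+1), mixP P n ε i * d ^ i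
        = (1 - ε) * (P i * d ^ i) + (if i = n then ε * d ^ n else 0) := by
      intro i _
      unfold mixP
      by_cases h : i = n
      · rw [h, if_pos rfl, if_pos rfl]; ring
      · rw [if_neg h, if_neg h]; ring
    rw [Finset.sum_congr rfl this, Finset.sum_add_distrib, ← Finset.mul_sum,
      Finset.sum_ite_eq' (Finset.range (n+1)) n _, if_pos (Finset.mem_range.mpr (by omega))]
  have hRm := Rmem_mix_ge d hd0 hd1 hP hB hnN hn1 hε0 hε1
  have hdn1 : d ^ n ≤ 1 := pow_le_one₀ hd0.le hd1.le
  have hdn0 : (0:ℝ) ≤ d ^ n := by positivity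
  unfold hPen
  rw [hpen]
  nlinarith [mul_nonneg (mul_nonneg hε0.le hΔ) (sub_nonneg.mpr hdn1)]


lemma Isup_bddAbove (d Δ : ℝ) (hd0 : 0 < d) (hd1 : d < 1) (hΔ : 0 ≤ Δ) (ℓ : ℝ) :
    BddAbove { r | ∃ P : ℕ → ℝ, IsRunPMF P ∧ Lmean P = ℓ ∧ r = hPen d Δ P } := by
  refine ⟨ℓ + 1, ?_⟩
  rintro r ⟨P, hP, hL, rfl⟩
  calc hPen d Δ P ≤ Lmean P + 1 := hPen_le_mean_add_one d Δ hd0 hd1 hΔ P hP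
    _ = ℓ + 1 := by rw [hL]

lemma Isup_mono (d Δ : ℝ) (hd0 : 0 < d) (hd1 : d < 1) (hΔ : 0 ≤ Δ)
    (a b : ℝ) (ha : 1 ≤ a) (hab : a ≤ b) : Isup d Δ a ≤ Isup d Δ b := by
  rcases eq_or_lt_of_le hab with rfl | hab'
  · exact le_rfl
  unfold Isup
  obtain ⟨P₀, hP₀, hL₀⟩ := exists_runpmf a ha
  have hne : Set.Nonempty { r | ∃ P : ℕ → ℝ, IsRunPMF P ∧ Lmean P = a ∧ r = hPen d Δ P } :=
    ⟨hPen d Δ P₀, P₀, hP₀, hL₀, rfl⟩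
  apply csSup_le hne
  rintro x ⟨P, hP, hL, rfl⟩
  apply le_of_forall_pos_le_add
  intro δ hδ
  obtain ⟨N, hB⟩ := exists_suppBdd hP.2.2.1
  set c : ℝ := |hPen d Δ P| + Δ with hc
  have hc0 : 0 ≤ c := by positivity
  obtain ⟨n, hn⟩ := exists_nat_ge (max (max (N:ℝ) 1)
    (max (b + 1) (a + (b - a) * (c + 1) / δ)))
  have hnN : (N:ℝ) ≤ n := le_trans (le_max_of_le_left (le_max_left _ _)) hn
  have hn1 : (1:ℝ) ≤ n := le_trans (le_max_of_le_left (le_max_right _ _)) hn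
  have hnb : b + 1 ≤ (n:ℝ) := le_trans (le_max_of_le_right (le_max_left _ _)) hn
  have hnc : a + (b - a) * (c + 1) / δ ≤ (n:ℝ) :=
    le_trans (le_max_of_le_right (le_max_right _ _)) hn
  have hna : a < (n:ℝ) := by linarith
  have hden : (0:ℝ) < (n:ℝ) - a := by linarith
  set ε : ℝ := (b - a) / ((n:ℝ) - a) with hε
  have hε0 : 0 < ε := div_pos (by linarith) hden
  have hε1 : ε < 1 := by
    rw [hε, div_lt_one hden]
    linarith
  have hεc : ε * c ≤ δ := by
    have e1 : δ * ((b - a) * (c + 1) / δ) = (b - a) * (c + 1) := by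
      field_simp
    have e2 : ε * ((n:ℝ) - a) = b - a := by
      rw [hε]; field_simp
    nlinarith [mul_le_mul_of_nonneg_left (by linarith : (b - a) * (c + 1) / δ ≤ (n:ℝ) - a) hδ.le]
  set M := mixP P n ε with hM
  have hNn : N ≤ n := by exact_mod_cast hnN
  have hn1' : 1 ≤ n := by exact_mod_cast hn1
  have hMpmf : IsRunPMF M := mixP_isRunPMF hP hB hNn hn1' hε0.le hε1.le
  have hML : Lmean M = b := by
    rw [hM, mixP_Lmean hB hNn ε, hL]
    have : ε * ((n:ℝ) - a) = b - a := by rw [hε]; field_simp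
    nlinarith [this]
  have hmem : hPen d Δ M ∈ { r | ∃ P : ℕ → ℝ, IsRunPMF P ∧ Lmean P = b ∧ r = hPen d Δ P } :=
    ⟨M, hMpmf, hML, rfl⟩
  have hle : hPen d Δ M ≤ sSup { r | ∃ P : ℕ → ℝ, IsRunPMF P ∧ Lmean P = b ∧ r = hPen d Δ P } :=
    le_csSup (Isup_bddAbove d Δ hd0 hd1 hΔ b) hmem
  have hkey : (1 - ε) * hPen d Δ P - ε * Δ ≤ hPen d Δ M :=
    mixP_hPen d Δ hd0 hd1 hΔ hP hB hNn hn1' hε0 hε1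
  have habs : hPen d Δ P ≤ |hPen d Δ P| := le_abs_self _
  nlinarith [mul_le_mul_of_nonneg_left habs hε0.le]

/-- For `d ∈ (0,1)`, `Δ ≥ 0`, `1 ≤ ℓ₁ < ℓ < ℓ₂` and `I(ℓ₁) ≥ 0`,
we have `I(ℓ₁)/ℓ₂ ≤ I(ℓ)/ℓ ≤ I(ℓ₂)/ℓ₁`. -/
theorem Isup_div_bounds (d Δ : ℝ) (hd₀ : 0 < d) (hd₁ : d < 1) (hΔ : 0 ≤ Δ)
    (ℓ₁ ℓ ℓ₂ : ℝ) (h₁ : 1 ≤ ℓ₁) (h₂ : ℓ₁ < ℓ) (h₃ : ℓ < ℓ₂)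
    (hI : 0 ≤ Isup d Δ ℓ₁) :
    Isup d Δ ℓ₁ / ℓ₂ ≤ Isup d Δ ℓ / ℓ ∧ Isup d Δ ℓ / ℓ ≤ Isup d Δ ℓ₂ / ℓ₁ := by
  have hm1 : Isup d Δ ℓ₁ ≤ Isup d Δ ℓ := Isup_mono d Δ hd₀ hd₁ hΔ ℓ₁ ℓ h₁ h₂.le
  have hm2 : Isup d Δ ℓ ≤ Isup d Δ ℓ₂ := Isup_mono d Δ hd₀ hd₁ hΔ ℓ ℓ₂ (by linarith) h₃.le
  have hI2 : 0 ≤ Isup d Δ ℓ := le_trans hI hm1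
  have hI3 : 0 ≤ Isup d Δ ℓ₂ := le_trans hI2 hm2
  have hℓ1 : (0:ℝ) < ℓ₁ := by linarith
  have hℓ : (0:ℝ) < ℓ := by linarith
  have hℓ2 : (0:ℝ) < ℓ₂ := by linarith
  constructor
  · rw [div_le_div_iff₀ hℓ2 hℓ]
    nlinarith [mul_le_mul_of_nonneg_right hm1 hℓ.le, mul_le_mul_of_nonneg_left h₃.le hI2]
  · rw [div_le_div_iff₀ hℓ hℓ1]
    nlinarith [mul_le_mul_of_nonneg_right hm2 hℓ1.le, mul_le_mul_of_nonneg_left h₂.le hI3]
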